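/- arXiv:2605.17524 — 3 statements merged into one kernel-verified Lean document; each statement's English description precedes it below -/
import Mathlib

section
/- Let (Z_i, Z_j) be jointly Gaussian with means μ_i, μ_j, variances σ_i², σ_j², and covariance Σ_{ij}. Then Cov(sign(Z_i), Z_j) = a_i · Σ_{ij}, where a_i = 2φ(μ_i/σ_i)/σ_i and φ is the standard normal density. -/
open MeasureTheory ProbabilityTheory Real

/-- Standard normal density `φ(t) = (2π)^{-1/2} e^{-t²/2}`. -/
noncomputable def stdNormalPDF (t : ℝ) : ℝ :=
  (Real.sqrt (2 * Real.pi))⁻¹ * Real.exp (-t ^ 2 / 2)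

/-!
With `(X, Y)` the coordinates of the product measure, `Zᵢ = μᵢ + σᵢ X` and
`Zⱼ = μⱼ + (Σᵢⱼ/σᵢ) X + d Y`. Bilinearity of the covariance and independence of `X` and `Y`
reduce the claim to `(Σᵢⱼ/σᵢ) Cov(sign(μᵢ + σᵢ X), X) = (Σᵢⱼ/σᵢ) E[X sign(μᵢ + σᵢ X)]`.
Since `x φ(x) = -φ'(x)`, splitting this expectation at the zero `a = -μᵢ/σᵢ` of `μᵢ + σᵢ x` gives
`∫_a^∞ x φ - ∫_{-∞}^a x φ = φ(a) + φ(a) = 2 φ(μᵢ/σᵢ)`.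
-/

open Set Filter Topology

namespace Real

lemma measurable_sign : Measurable sign :=
  Measurable.ite measurableSet_Iio measurable_const
    (Measurable.ite measurableSet_Ioi measurable_const measurable_const)

lemma abs_sign_le_one (r : ℝ) : |sign r| ≤ 1 := by
  rcases sign_apply_eq r with h | h | h <;> simp [h]

lemma sign_mul_of_pos {a : ℝ} (ha : 0 < a) (r : ℝ) : sign (a * r) = sign r := by
  rcases lt_trichotomy r 0 with h | rfl | h
  · rw [sign_of_neg h, sign_of_neg (mul_neg_of_pos_of_neg ha h)]
  · simp
  · rw [sign_of_pos h, sign_of_pos (mul_pos ha h)]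

end Real

lemma stdNormalPDF_eq_gaussianPDFReal : stdNormalPDF = gaussianPDFReal 0 1 := by
  funext x; simp [stdNormalPDF, gaussianPDFReal]

lemma stdNormalPDF_neg (t : ℝ) : stdNormalPDF (-t) = stdNormalPDF t := by
  simp [stdNormalPDF]

lemma integral_gaussianReal_zero_one (f : ℝ → ℝ) :
    ∫ x, f x ∂gaussianReal 0 1 = ∫ x, stdNormalPDF x * f x := by
  simp [integral_gaussianReal_eq_integral_smul one_ne_zero, stdNormalPDF_eq_gaussianPDFReal]

lemma integrable_stdNormalPDF : Integrable stdNormalPDF :=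
  stdNormalPDF_eq_gaussianPDFReal ▸ integrable_gaussianPDFReal 0 1

lemma integrable_mul_stdNormalPDF : Integrable fun x => x * stdNormalPDF x := by
  refine ((integrable_mul_exp_neg_mul_sq (b := 1 / 2) (by norm_num)).const_mul
    (√(2 * π))⁻¹).congr (ae_of_all _ fun x => ?_)
  simp only [stdNormalPDF]
  ring_nf

lemma hasDerivAt_stdNormalPDF (x : ℝ) :
    HasDerivAt stdNormalPDF (-(x * stdNormalPDF x)) x := by
  have hexp : HasDerivAt (fun y : ℝ => -y ^ 2 / 2) (-x) x :=
    ((hasDerivAt_pow 2 x).neg.div_const 2).congr_deriv (by push_cast; ring)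
  exact (hexp.exp.const_mul (√(2 * π))⁻¹).congr_deriv (by simp only [stdNormalPDF]; ring)

lemma hasDerivAt_neg_stdNormalPDF (x : ℝ) :
    HasDerivAt (-stdNormalPDF) (x * stdNormalPDF x) x := by
  simpa using (hasDerivAt_stdNormalPDF x).neg

lemma integral_Ioi_mul_stdNormalPDF (a : ℝ) :
    ∫ x in Ioi a, x * stdNormalPDF x = stdNormalPDF a := by
  have hlim : Tendsto stdNormalPDF atTop (𝓝 0) :=
    tendsto_zero_of_hasDerivAt_of_integrableOn_Ioi (a := a) (fun x _ => hasDerivAt_stdNormalPDF x)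
      integrable_mul_stdNormalPDF.neg.integrableOn integrable_stdNormalPDF.integrableOn
  simpa using integral_Ioi_of_hasDerivAt_of_tendsto' (fun x _ => hasDerivAt_neg_stdNormalPDF x)
    integrable_mul_stdNormalPDF.integrableOn hlim.neg

lemma integral_Iic_mul_stdNormalPDF (a : ℝ) :
    ∫ x in Iic a, x * stdNormalPDF x = -stdNormalPDF a := by
  have hlim : Tendsto stdNormalPDF atBot (𝓝 0) :=
    tendsto_zero_of_hasDerivAt_of_integrableOn_Iic (a := a) (fun x _ => hasDerivAt_stdNormalPDF x)
      integrable_mul_stdNormalPDF.neg.integrableOn integrable_stdNormalPDF.integrableOn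
  simpa using integral_Iic_of_hasDerivAt_of_tendsto' (fun x _ => hasDerivAt_neg_stdNormalPDF x)
    integrable_mul_stdNormalPDF.integrableOn hlim.neg

lemma integral_mul_sign_sub_gaussianReal (a : ℝ) :
    ∫ x, x * sign (x - a) ∂gaussianReal 0 1 = 2 * stdNormalPDF a := by
  have hsplit : (fun x => stdNormalPDF x * (x * sign (x - a))) =
      fun x => (Ioi a).indicator (fun x => x * stdNormalPDF x) x -
        (Iio a).indicator (fun x => x * stdNormalPDF x) x := by
    funext x
    rcases lt_trichotomy x a with h | rfl | h
    · simp [h, h.not_gt, sign_of_neg (sub_neg.2 h), mul_comm]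
    · simp
    · simp [h, h.not_gt, sign_of_pos (sub_pos.2 h), mul_comm]
  rw [integral_gaussianReal_zero_one, hsplit,
    integral_sub (integrable_mul_stdNormalPDF.indicator measurableSet_Ioi)
      (integrable_mul_stdNormalPDF.indicator measurableSet_Iio),
    integral_indicator measurableSet_Ioi, integral_indicator measurableSet_Iio,
    setIntegral_congr_set Iio_ae_eq_Iic, integral_Ioi_mul_stdNormalPDF,
    integral_Iic_mul_stdNormalPDF]
  ring

lemma integral_mul_sign_affine_gaussianReal (μ : ℝ) {σ : ℝ} (hσ : 0 < σ) :
    ∫ x, x * sign (μ + σ * x) ∂gaussianReal 0 1 = 2 * stdNormalPDF (μ / σ) := by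
  have hshift x : sign (μ + σ * x) = sign (x - -(μ / σ)) := by
    rw [← sign_mul_of_pos hσ (x - -(μ / σ)), sub_neg_eq_add, mul_add,
      mul_div_cancel₀ _ hσ.ne', add_comm]
  simp_rw [hshift, integral_mul_sign_sub_gaussianReal, stdNormalPDF_neg]

lemma memLp_sign_comp {Ω : Type*} [MeasurableSpace Ω] {μ : Measure Ω} [IsFiniteMeasure μ]
    {f : Ω → ℝ} (hf : Measurable f) (p : ENNReal) : MemLp (fun ω => sign (f ω)) p μ :=
  MemLp.of_bound (measurable_sign.comp hf).aestronglyMeasurable 1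
    (ae_of_all _ fun ω => by simpa using abs_sign_le_one (f ω))

lemma covariance_sign_affine_id_gaussianReal (μ : ℝ) {σ : ℝ} (hσ : 0 < σ) :
    cov[fun x => sign (μ + σ * x), id; gaussianReal 0 1] = 2 * stdNormalPDF (μ / σ) := by
  rw [covariance_eq_sub (memLp_sign_comp (by fun_prop) 2) (memLp_id_gaussianReal 2)]
  simp only [id, integral_id_gaussianReal, mul_zero, sub_zero, Pi.mul_apply]
  simp_rw [mul_comm (sign _)]
  exact integral_mul_sign_affine_gaussianReal μ hσ

lemma covariance_comp_fst_add_comp_snd {Ω Ω' : Type*} [MeasurableSpace Ω] [MeasurableSpace Ω']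
    {μ : Measure Ω} {ν : Measure Ω'} [IsProbabilityMeasure μ] [IsProbabilityMeasure ν]
    {X Y : Ω → ℝ} {Z : Ω' → ℝ} (hX : MemLp X 2 μ) (hY : MemLp Y 2 μ) (hZ : MemLp Z 2 ν) :
    cov[fun p => X p.1, fun p => Y p.1 + Z p.2; μ.prod ν] = cov[X, Y; μ] := by
  have hfst : (μ.prod ν).map Prod.fst = μ := by simp
  have hmarg : cov[fun p => X p.1, fun p => Y p.1; μ.prod ν] = cov[X, Y; μ] := by
    have := covariance_map_fun (hfst ▸ hX.1) (hfst ▸ hY.1) measurable_fst.aemeasurable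
    rwa [hfst, eq_comm] at this
  rw [show (fun p : Ω × Ω' => Y p.1 + Z p.2) = (fun p => Y p.1) + fun p => Z p.2 from rfl,
    covariance_add_right (hX.comp_fst ν) (hY.comp_fst ν) (hZ.comp_snd μ),
    covariance_fst_snd_prod hX hZ, add_zero, hmarg]

theorem stmt_2_general (μi μj σi σj Sij : ℝ) (hσi : 0 < σi) :
    let P := (gaussianReal 0 1).prod (gaussianReal 0 1)
    let Zi : ℝ × ℝ → ℝ := fun p => μi + σi * p.1
    let Zj : ℝ × ℝ → ℝ := fun p =>
      μj + (Sij / σi) * p.1 + Real.sqrt (σj ^ 2 - (Sij / σi) ^ 2) * p.2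
    (∫ p, Real.sign (Zi p) * Zj p ∂P) -
        (∫ p, Real.sign (Zi p) ∂P) * (∫ p, Zj p ∂P) =
      (2 * stdNormalPDF (μi / σi) / σi) * Sij := by
  intro P Zi Zj
  set γ := gaussianReal 0 1
  set c := Sij / σi
  set d := √(σj ^ 2 - c ^ 2)
  have hs : MemLp (fun x => sign (μi + σi * x)) 2 γ := memLp_sign_comp (by fun_prop) 2
  have hlin : MemLp (fun x => c * x) 2 γ := (memLp_id_gaussianReal 2).const_mul c
  have hY : MemLp (fun x => μj + c * x) 2 γ := (memLp_const μj).add hlin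
  have hZ : MemLp (fun y => d * y) 2 γ := (memLp_id_gaussianReal 2).const_mul d
  calc _ = cov[fun p => sign (Zi p), Zj; P] :=
        (covariance_eq_sub (hs.comp_fst γ) ((hY.comp_fst γ).add (hZ.comp_snd γ))).symm
    _ = cov[fun x => sign (μi + σi * x), fun x => μj + c * x; γ] :=
        covariance_comp_fst_add_comp_snd hs hY hZ
    _ = c * cov[fun x => sign (μi + σi * x), id; γ] := by
        rw [covariance_const_add_right (hlin.integrable one_le_two)]
        exact covariance_const_mul_right c
    _ = _ := by
        rw [covariance_sign_affine_id_gaussianReal μi hσi]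
        ring

/-- Stein's lemma for the sign function.  A pair `(Zᵢ, Zⱼ)` that is jointly Gaussian with
means `μᵢ, μⱼ`, variances `σᵢ², σⱼ²` and covariance `Σᵢⱼ` is realized as the image of two
independent standard Gaussians `p = (p₁, p₂)` under
`Zᵢ = μᵢ + σᵢ p₁`, `Zⱼ = μⱼ + (Σᵢⱼ/σᵢ) p₁ + √(σⱼ² - (Σᵢⱼ/σᵢ)²) p₂`.
Then `Cov(sign Zᵢ, Zⱼ) = aᵢ Σᵢⱼ` where `aᵢ = 2φ(μᵢ/σᵢ)/σᵢ`. -/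
theorem stmt_2 (μi μj σi σj Sij : ℝ) (hσi : 0 < σi) (hσj : 0 < σj)
    (hcs : Sij ^ 2 ≤ σi ^ 2 * σj ^ 2) :
    let P := (gaussianReal 0 1).prod (gaussianReal 0 1)
    let Zi : ℝ × ℝ → ℝ := fun p => μi + σi * p.1
    let Zj : ℝ × ℝ → ℝ := fun p =>
      μj + (Sij / σi) * p.1 + Real.sqrt (σj ^ 2 - (Sij / σi) ^ 2) * p.2
    (∫ p, Real.sign (Zi p) * Zj p ∂P) -
        (∫ p, Real.sign (Zi p) ∂P) * (∫ p, Zj p ∂P) =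
      (2 * stdNormalPDF (μi / σi) / σi) * Sij :=
  stmt_2_general μi μj σi σj Sij hσi
end

section
/- Let (X, Y) be centered jointly Gaussian with Pearson correlation r ∈ [-1, 1] and nondegenerate marginals. Then the Spearman rank correlation of (X, Y) equals (6/π) arcsin(r/2). -/
open MeasureTheory ProbabilityTheory Real Filter Set
open scoped ENNReal NNReal Topology

noncomputable def phi (x : ℝ) : ℝ := (Real.sqrt (2 * π))⁻¹ * Real.exp (-x ^ 2 / 2)

noncomputable def Phi : ℝ → ℝ := cdf (gaussianReal 0 1)

lemma phi_eq : phi = gaussianPDFReal 0 1 := by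
  ext x
  simp [phi, gaussianPDFReal]

lemma phi_nonneg (x : ℝ) : 0 ≤ phi x := by rw [phi_eq]; exact gaussianPDFReal_nonneg 0 1 x

lemma phi_le (x : ℝ) : phi x ≤ (Real.sqrt (2 * π))⁻¹ := by
  have h1 : Real.exp (-x ^ 2 / 2) ≤ 1 := by
    rw [Real.exp_le_one_iff]; nlinarith [sq_nonneg x]
  have h2 : (0:ℝ) ≤ (Real.sqrt (2 * π))⁻¹ := by positivity

  calc phi x ≤ (Real.sqrt (2 * π))⁻¹ * 1 := mul_le_mul_of_nonneg_left h1 h2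
  _ = _ := mul_one _

lemma phi_cont : Continuous phi := by unfold phi; continuity

lemma phi_integrable : Integrable phi := phi_eq ▸ integrable_gaussianPDFReal 0 1

lemma phi_integral_one : ∫ x, phi x = 1 := phi_eq ▸ integral_gaussianPDFReal_eq_one 0 one_ne_zero

lemma Phi_eq_integral (x : ℝ) : Phi x = ∫ t in Iic x, phi t := by
  rw [Phi, cdf_eq_real, measureReal_def, gaussianReal_apply_eq_integral 0 one_ne_zero,
    ENNReal.toReal_ofReal
      (setIntegral_nonneg measurableSet_Iic fun t _ => gaussianPDFReal_nonneg 0 1 t)]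
  rw [phi_eq]

lemma hasDerivAt_Phi (x : ℝ) : HasDerivAt Phi (phi x) x := by
  have key : ∀ y : ℝ, Phi y = Phi 0 + ∫ t in (0:ℝ)..y, phi t := by
    intro y
    rw [Phi_eq_integral, Phi_eq_integral,
      ← intervalIntegral.integral_Iic_sub_Iic phi_integrable.integrableOn
        phi_integrable.integrableOn]
    ring
  have : HasDerivAt (fun y => Phi 0 + ∫ t in (0:ℝ)..y, phi t) (phi x) x :=
    ((phi_cont.integral_hasStrictDerivAt 0 x).hasDerivAt).const_add _
  exact this.congr_of_eventuallyEq (Filter.Eventually.of_forall key)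

lemma Phi_cont : Continuous Phi :=
  continuous_iff_continuousAt.2 fun x => (hasDerivAt_Phi x).continuousAt

lemma Phi_nonneg (x : ℝ) : 0 ≤ Phi x := cdf_nonneg _ _
lemma Phi_le_one (x : ℝ) : Phi x ≤ 1 := cdf_le_one _ _

lemma phi_even (x : ℝ) : phi (-x) = phi x := by simp [phi]

lemma Phi_neg (x : ℝ) : Phi (-x) = 1 - Phi x := by
  have h1 : Phi (-x) = ∫ t in Ioi x, phi t := by
    rw [Phi_eq_integral]
    have := integral_comp_neg_Iic (-x) phi
    simp only [neg_neg] at this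
    rw [← this]
    exact setIntegral_congr_fun measurableSet_Iic fun t _ => (phi_even t).symm
  have h2 : Phi x + ∫ t in Ioi x, phi t = 1 := by
    rw [Phi_eq_integral,
      intervalIntegral.integral_Iic_add_Ioi phi_integrable.integrableOn
        phi_integrable.integrableOn, phi_integral_one]
  linarith

lemma Phi_zero : Phi 0 = 1 / 2 := by
  have := Phi_neg 0
  rw [neg_zero] at this
  linarith

lemma integral_gaussianReal_eq (f : ℝ → ℝ) :
    ∫ x, f x ∂(gaussianReal 0 1) = ∫ x, f x * phi x := by
  rw [gaussianReal_of_var_ne_zero 0 one_ne_zero]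
  have h : gaussianPDF 0 1 = fun x => ((gaussianPDFReal 0 1 x).toNNReal : ℝ≥0∞) := rfl
  rw [h, integral_withDensity_eq_integral_smul
    ((measurable_gaussianPDFReal 0 1).real_toNNReal) f]
  congr 1
  ext x
  rw [NNReal.smul_def, Real.coe_toNNReal _ (gaussianPDFReal_nonneg 0 1 x), smul_eq_mul,
    mul_comm, phi_eq]

lemma gauss_int {α : ℝ} (hα : 0 < α) :
    ∫ x : ℝ, Real.exp (-(α * x ^ 2) / 2) = Real.sqrt (2 * π / α) := by
  have h : ∀ x : ℝ, -(α * x ^ 2) / 2 = -(α / 2 * x ^ 2) := fun x => by ring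
  simp_rw [h]
  rw [show ∀ b : ℝ, (fun x : ℝ => Real.exp (-(b * x ^ 2))) = fun x => Real.exp (-b * x ^ 2) from
    fun b => by funext x; ring_nf] at *
  have := integral_gaussian (α / 2)
  simp_rw [show ∀ x : ℝ, -(α / 2 * x ^ 2) = -(α/2) * x ^ 2 from fun x => by ring] at *
  rw [this]
  congr 1
  field_simp

lemma gauss_int_shift {α : ℝ} (hα : 0 < α) (c : ℝ) :
    ∫ v : ℝ, Real.exp (-(α * (v + c) ^ 2) / 2) = Real.sqrt (2 * π / α) := by
  rw [MeasureTheory.integral_add_right_eq_self (fun v => Real.exp (-(α * v ^ 2) / 2)) c]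
  exact gauss_int hα

lemma integrable_bdd {X : Type*} [MeasurableSpace X] {μ : Measure X} [IsFiniteMeasure μ]
    {g : X → ℝ} {C : ℝ}
    (hm : AEStronglyMeasurable g μ) (hb : ∀ x, ‖g x‖ ≤ C) : Integrable g μ :=
  (integrable_const C).mono' hm (ae_of_all _ hb)

lemma gaussian_symm : Measure.map (fun x : ℝ => -x) (gaussianReal 0 1) = gaussianReal 0 1 := by
  have h := gaussianReal_map_const_mul (μ := 0) (v := 1) (-1)
  simp only [neg_mul, one_mul, mul_zero, neg_zero] at h
  rw [h]
  congr 1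
  rw [mul_one]
  exact NNReal.coe_injective (by norm_num)

lemma Phi_norm_le (x : ℝ) : ‖Phi x‖ ≤ 1 := by
  rw [Real.norm_eq_abs, abs_of_nonneg (Phi_nonneg _)]; exact Phi_le_one _

lemma half (b : ℝ) : ∫ v, Phi (b * v) ∂(gaussianReal 0 1) = 1 / 2 := by
  have hγ : True := trivial
  have hc : Continuous fun v : ℝ => Phi (b * v) :=
    Phi_cont.comp (continuous_const.mul continuous_id)
  have hint : Integrable (fun v => Phi (b * v)) (gaussianReal 0 1) :=
    integrable_bdd hc.aestronglyMeasurable fun x => Phi_norm_le _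
  have h1 : ∫ v, Phi (b * v) ∂(gaussianReal 0 1) = ∫ v, Phi (b * -v) ∂(gaussianReal 0 1) := by
    conv_lhs => rw [← gaussian_symm]
    rw [integral_map measurable_neg.aemeasurable]
    rw [gaussian_symm]
    exact hc.aestronglyMeasurable
  have h2 : ∫ v, Phi (b * -v) ∂(gaussianReal 0 1)
      = ∫ v, (1 - Phi (b * v)) ∂(gaussianReal 0 1) := by
    congr 1; funext v
    rw [show b * -v = -(b * v) by ring, Phi_neg]
  have h3 : ∫ v, (1 - Phi (b * v)) ∂(gaussianReal 0 1)
      = 1 - ∫ v, Phi (b * v) ∂(gaussianReal 0 1) := by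
    rw [integral_sub (integrable_const 1) hint, integral_const]
    simp
  rw [h2, h3] at h1
  linarith

lemma phi_mul_phi (a b v : ℝ) : phi (a + b * v) * phi v =
    (2 * π)⁻¹ * Real.exp (-(a ^ 2 / (1 + b ^ 2)) / 2) *
      Real.exp (-((1 + b ^ 2) * (v + a * b / (1 + b ^ 2)) ^ 2) / 2) := by
  have hα : (0:ℝ) < 1 + b ^ 2 := by positivity
  have hs : Real.sqrt (2 * π) * Real.sqrt (2 * π) = 2 * π :=
    Real.mul_self_sqrt (by positivity)
  unfold phi
  rw [show ((Real.sqrt (2*π))⁻¹ * Real.exp (-(a + b*v) ^ 2 / 2)) * ((Real.sqrt (2*π))⁻¹ * Real.exp (-v ^ 2 / 2))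
      = ((Real.sqrt (2*π)) * (Real.sqrt (2*π)))⁻¹ * (Real.exp (-(a + b*v) ^ 2 / 2) * Real.exp (-v ^ 2 / 2)) by ring, hs,
    ← Real.exp_add, mul_assoc, ← Real.exp_add]
  congr 2
  field_simp
  ring

lemma integral_phi_phi (a b : ℝ) : ∫ v, phi (a + b * v) * phi v =
    phi (a / Real.sqrt (1 + b ^ 2)) * (Real.sqrt (1 + b ^ 2))⁻¹ := by
  have hα : (0:ℝ) < 1 + b ^ 2 := by positivity
  have hsα : (0:ℝ) < Real.sqrt (1 + b ^ 2) := Real.sqrt_pos.2 hα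
  simp_rw [phi_mul_phi a b]
  rw [MeasureTheory.integral_const_mul, gauss_int_shift hα (a * b / (1 + b ^ 2))]
  unfold phi
  rw [Real.sqrt_div (by positivity : (0:ℝ) ≤ 2 * π), div_pow,
    Real.sq_sqrt hα.le]
  have hs : Real.sqrt (2 * π) * Real.sqrt (2 * π) = 2 * π :=
    Real.mul_self_sqrt (by positivity)
  have h2π : (0:ℝ) < Real.sqrt (2 * π) := Real.sqrt_pos.2 (by positivity)
  have hsm : Real.sqrt 2 * Real.sqrt π = Real.sqrt (2 * π) :=
    (Real.sqrt_mul (by norm_num : (0:ℝ) ≤ 2) π).symm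
  field_simp
  linear_combination hs

lemma stepA (a b : ℝ) :
    ∫ v, Phi (a + b * v) ∂(gaussianReal 0 1) = Phi (a / Real.sqrt (1 + b ^ 2)) := by
  have hα : (0:ℝ) < 1 + b ^ 2 := by positivity
  have hsα : (0:ℝ) < Real.sqrt (1 + b ^ 2) := Real.sqrt_pos.2 hα
  have hcont : ∀ y : ℝ, Continuous fun v : ℝ => Phi (y + b * v) := fun y =>
    Phi_cont.comp (continuous_const.add (continuous_const.mul continuous_id))
  have hgd : ∀ x : ℝ, HasDerivAt (fun y => ∫ v, Phi (y + b * v) ∂(gaussianReal 0 1))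
      (phi (x / Real.sqrt (1 + b ^ 2)) * (Real.sqrt (1 + b ^ 2))⁻¹) x := by
    intro x
    have H := hasDerivAt_integral_of_dominated_loc_of_deriv_le (μ := gaussianReal 0 1)
      (F := fun y v => Phi (y + b * v)) (F' := fun y v => phi (y + b * v))
      (x₀ := x) (bound := fun _ => (Real.sqrt (2 * π))⁻¹) (Metric.ball_mem_nhds x one_pos)
      (Eventually.of_forall fun y => (hcont y).aestronglyMeasurable)
      (integrable_bdd (hcont x).aestronglyMeasurable fun v => Phi_norm_le _)
      ((phi_cont.comp (continuous_const.add
        (continuous_const.mul continuous_id))).aestronglyMeasurable)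
      (ae_of_all _ fun v y _ => by
        rw [Real.norm_eq_abs, abs_of_nonneg (phi_nonneg _)]; exact phi_le _)
      (integrable_const _)
      (ae_of_all _ fun v y _ => by
        simpa [Function.comp_def] using (hasDerivAt_Phi (y + b * v)).comp y ((hasDerivAt_id y).add_const (b * v)))
    have hieq : ∫ v, phi (x + b * v) ∂(gaussianReal 0 1)
        = phi (x / Real.sqrt (1 + b ^ 2)) * (Real.sqrt (1 + b ^ 2))⁻¹ := by
      rw [integral_gaussianReal_eq, integral_phi_phi]
    rw [hieq] at H
    exact H.2
  have hhd : ∀ x : ℝ, HasDerivAt (fun y => Phi (y / Real.sqrt (1 + b ^ 2)))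
      (phi (x / Real.sqrt (1 + b ^ 2)) * (Real.sqrt (1 + b ^ 2))⁻¹) x := by
    intro x
    have := (hasDerivAt_Phi (x / Real.sqrt (1 + b ^ 2))).comp x
      ((hasDerivAt_id x).div_const (Real.sqrt (1 + b ^ 2)))
    simpa [Function.comp_def, div_eq_mul_inv] using this
  have hconst : ∀ x : ℝ, (∫ v, Phi (x + b * v) ∂(gaussianReal 0 1))
      - Phi (x / Real.sqrt (1 + b ^ 2))
      = (∫ v, Phi (0 + b * v) ∂(gaussianReal 0 1)) - Phi (0 / Real.sqrt (1 + b ^ 2)) := by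
    intro x
    exact is_const_of_deriv_eq_zero
      (fun y => ((hgd y).sub (hhd y)).differentiableAt)
      (fun y => by rw [((hgd y).sub (hhd y)).deriv]; ring) x 0
  have h1 : ∫ v, Phi ((0:ℝ) + b * v) ∂(gaussianReal 0 1) = 1 / 2 := by
    simpa using half b
  have h2 : Phi ((0:ℝ) / Real.sqrt (1 + b ^ 2)) = 1 / 2 := by
    rw [zero_div, Phi_zero]
  have := hconst a
  rw [h1, h2] at this
  linarith

lemma habs_exp : Integrable (fun u : ℝ => |u| * Real.exp (-u ^ 2 / 2)) := by
  have h := (integrable_mul_exp_neg_mul_sq (by norm_num : (0:ℝ) < 1/2)).abs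
  refine h.congr (ae_of_all _ fun x => ?_)
  show |x * Real.exp (-(1/2) * x ^ 2)| = |x| * Real.exp (-x ^ 2 / 2)
  rw [abs_mul, abs_of_pos (Real.exp_pos _)]
  congr 2
  ring

lemma hexp_int {α : ℝ} (hα : 0 < α) :
    Integrable (fun u : ℝ => Real.exp (-(α * u ^ 2) / 2)) := by
  have h := integrable_exp_neg_mul_sq (by positivity : (0:ℝ) < α / 2)
  refine h.congr (ae_of_all _ fun x => ?_)
  show Real.exp (-(α/2) * x ^ 2) = Real.exp (-(α * x ^ 2) / 2)
  congr 1
  ring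

lemma integrable_bound_gauss :
    Integrable (fun u : ℝ => |u| * (Real.sqrt (2 * π))⁻¹) (gaussianReal 0 1) := by
  rw [gaussianReal_of_var_ne_zero 0 one_ne_zero,
    integrable_withDensity_iff (measurable_gaussianPDF 0 1)
      (ae_of_all _ fun x => ENNReal.ofReal_lt_top)]
  have heq : ∀ x : ℝ, (gaussianPDF 0 1 x).toReal = phi x := fun x => by
    rw [gaussianPDF, ENNReal.toReal_ofReal (gaussianPDFReal_nonneg 0 1 x), ← phi_eq]
  have h := habs_exp.const_mul ((Real.sqrt (2 * π))⁻¹ * (Real.sqrt (2 * π))⁻¹)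
  refine h.congr (ae_of_all _ fun x => ?_)
  show (Real.sqrt (2*π))⁻¹ * (Real.sqrt (2*π))⁻¹ * (|x| * Real.exp (-x ^ 2 / 2))
    = |x| * (Real.sqrt (2*π))⁻¹ * (gaussianPDF 0 1 x).toReal
  rw [heq x]
  unfold phi
  ring

lemma tendsto_gauss_top {α : ℝ} (hα : 0 < α) :
    Tendsto (fun x : ℝ => Real.exp (-(α * x ^ 2) / 2)) atTop (𝓝 0) := by
  apply Real.tendsto_exp_atBot.comp
  have h1 : Tendsto (fun x : ℝ => x ^ 2) atTop atTop := tendsto_pow_atTop two_ne_zero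
  have h2 : Tendsto (fun x : ℝ => α * x ^ 2) atTop atTop := h1.const_mul_atTop hα
  have h3 : Tendsto (fun x : ℝ => -(α * x ^ 2)) atTop atBot := tendsto_neg_atBot_iff.2 h2
  exact h3.atBot_div_const two_pos

lemma tendsto_gauss_bot {α : ℝ} (hα : 0 < α) :
    Tendsto (fun x : ℝ => Real.exp (-(α * x ^ 2) / 2)) atBot (𝓝 0) := by
  have h := (tendsto_gauss_top hα).comp tendsto_neg_atBot_atTop
  refine h.congr fun x => ?_
  simp [neg_sq]

lemma integral_Phi_mul_gauss {α : ℝ} (hα : 1 ≤ α) :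
    ∫ x, Phi x * (x * Real.exp (-(α * x ^ 2) / 2)) = (α * Real.sqrt (1 + α))⁻¹ := by
  have hα0 : (0:ℝ) < α := lt_of_lt_of_le one_pos hα
  have hv : ∀ x : ℝ, HasDerivAt (fun y : ℝ => -(α⁻¹ * Real.exp (-(α * y ^ 2) / 2)))
      (x * Real.exp (-(α * x ^ 2) / 2)) x := by
    intro x
    have hg : HasDerivAt (fun y : ℝ => -(α * y ^ 2) / 2) (-(α * x)) x := by
      have := ((hasDerivAt_pow 2 x).const_mul α).neg.div_const 2
      refine this.congr_deriv ?_
      simp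
      ring
    have := (hg.exp.const_mul α⁻¹).neg
    refine this.congr_deriv ?_
    field_simp
  have hI1 : Integrable (fun x => Phi x * (x * Real.exp (-(α * x ^ 2) / 2))) := by
    refine habs_exp.mono' ?_ (ae_of_all _ fun x => ?_)
    · exact (Phi_cont.mul (continuous_id.mul (by continuity))).aestronglyMeasurable
    · rw [Real.norm_eq_abs, abs_mul, abs_mul, abs_of_nonneg (Phi_nonneg x)]
      have h1 : Real.exp (-(α * x ^ 2) / 2) ≤ Real.exp (-x ^ 2 / 2) := by
        apply Real.exp_le_exp.2
        nlinarith [sq_nonneg x]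
      have h2 : |Real.exp (-(α * x ^ 2) / 2)| ≤ Real.exp (-x ^ 2 / 2) := by
        rwa [abs_of_pos (Real.exp_pos _)]
      calc Phi x * (|x| * |Real.exp (-(α * x ^ 2) / 2)|)
          ≤ 1 * (|x| * Real.exp (-x ^ 2 / 2)) := by
            apply mul_le_mul (Phi_le_one x) (mul_le_mul_of_nonneg_left h2 (abs_nonneg x))
              (by positivity) one_pos.le
        _ = |x| * Real.exp (-x ^ 2 / 2) := one_mul _
  have hI2 : Integrable (fun x => phi x * -(α⁻¹ * Real.exp (-(α * x ^ 2) / 2))) := by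
    refine ((hexp_int hα0).const_mul ((Real.sqrt (2*π))⁻¹ * α⁻¹)).mono'
      ((phi_cont.mul (by continuity)).aestronglyMeasurable) (ae_of_all _ fun x => ?_)
    rw [Real.norm_eq_abs, abs_mul, abs_of_nonneg (phi_nonneg x), abs_neg, abs_mul,
      abs_of_pos (Real.exp_pos _), abs_of_pos (by positivity : (0:ℝ) < α⁻¹)]
    calc phi x * (α⁻¹ * Real.exp (-(α * x ^ 2) / 2))
        ≤ (Real.sqrt (2*π))⁻¹ * (α⁻¹ * Real.exp (-(α * x ^ 2) / 2)) := by
          apply mul_le_mul_of_nonneg_right (phi_le x) (by positivity)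
      _ = (Real.sqrt (2*π))⁻¹ * α⁻¹ * Real.exp (-(α * x ^ 2) / 2) := by ring
  have htop : Tendsto (fun x => Phi x * -(α⁻¹ * Real.exp (-(α * x ^ 2) / 2))) atTop (𝓝 0) := by
    rw [tendsto_zero_iff_norm_tendsto_zero]
    apply squeeze_zero (g := fun x => α⁻¹ * Real.exp (-(α * x ^ 2) / 2))
      (fun x => norm_nonneg _)
    · intro x
      rw [Real.norm_eq_abs, abs_mul, abs_of_nonneg (Phi_nonneg x), abs_neg, abs_mul,
        abs_of_pos (Real.exp_pos _), abs_of_pos (by positivity : (0:ℝ) < α⁻¹)]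
      calc Phi x * (α⁻¹ * Real.exp (-(α * x ^ 2) / 2))
          ≤ 1 * (α⁻¹ * Real.exp (-(α * x ^ 2) / 2)) :=
            mul_le_mul_of_nonneg_right (Phi_le_one x) (by positivity)
        _ = α⁻¹ * Real.exp (-(α * x ^ 2) / 2) := one_mul _
    · simpa using (tendsto_gauss_top hα0).const_mul α⁻¹
  have hbot : Tendsto (fun x => Phi x * -(α⁻¹ * Real.exp (-(α * x ^ 2) / 2))) atBot (𝓝 0) := by
    rw [tendsto_zero_iff_norm_tendsto_zero]
    apply squeeze_zero (g := fun x => α⁻¹ * Real.exp (-(α * x ^ 2) / 2))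
      (fun x => norm_nonneg _)
    · intro x
      rw [Real.norm_eq_abs, abs_mul, abs_of_nonneg (Phi_nonneg x), abs_neg, abs_mul,
        abs_of_pos (Real.exp_pos _), abs_of_pos (by positivity : (0:ℝ) < α⁻¹)]
      calc Phi x * (α⁻¹ * Real.exp (-(α * x ^ 2) / 2))
          ≤ 1 * (α⁻¹ * Real.exp (-(α * x ^ 2) / 2)) :=
            mul_le_mul_of_nonneg_right (Phi_le_one x) (by positivity)
        _ = α⁻¹ * Real.exp (-(α * x ^ 2) / 2) := one_mul _
    · simpa using (tendsto_gauss_bot hα0).const_mul α⁻¹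
  have hIBP := integral_mul_deriv_eq_deriv_mul (u := Phi) (u' := phi)
    (v := fun y : ℝ => -(α⁻¹ * Real.exp (-(α * y ^ 2) / 2)))
    (v' := fun y : ℝ => y * Real.exp (-(α * y ^ 2) / 2)) (a' := 0) (b' := 0)
    (fun x _ => hasDerivAt_Phi x) (fun x _ => hv x) hI1 hI2 hbot htop
  rw [hIBP]
  have hcalc : ∫ x, phi x * -(α⁻¹ * Real.exp (-(α * x ^ 2) / 2))
      = -(α⁻¹ * ((Real.sqrt (2*π))⁻¹ * Real.sqrt (2 * π / (1 + α)))) := by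
    have heq : ∀ x : ℝ, phi x * -(α⁻¹ * Real.exp (-(α * x ^ 2) / 2))
        = -(α⁻¹ * (Real.sqrt (2*π))⁻¹) * Real.exp (-((1 + α) * x ^ 2) / 2) := by
      intro x
      unfold phi
      rw [show -(α⁻¹ * Real.exp (-(α * x ^ 2) / 2)) = -(α⁻¹) * Real.exp (-(α * x ^ 2) / 2) by ring]
      rw [show (Real.sqrt (2*π))⁻¹ * Real.exp (-x ^ 2 / 2) * (-(α⁻¹) * Real.exp (-(α * x ^ 2) / 2))
        = -(α⁻¹ * (Real.sqrt (2*π))⁻¹) * (Real.exp (-x ^ 2 / 2) * Real.exp (-(α * x ^ 2) / 2)) by ring]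
      rw [← Real.exp_add]
      congr 2
      ring
    simp_rw [heq]
    rw [MeasureTheory.integral_const_mul, gauss_int (by positivity : (0:ℝ) < 1 + α)]
    ring
  rw [hcalc]
  have h1α : (0:ℝ) < 1 + α := by positivity
  have hs1 : Real.sqrt (2 * π / (1 + α)) = Real.sqrt (2 * π) / Real.sqrt (1 + α) :=
    Real.sqrt_div (by positivity) _
  have hsπ : (0:ℝ) < Real.sqrt (2 * π) := Real.sqrt_pos.2 (by positivity)
  have hsα : (0:ℝ) < Real.sqrt (1 + α) := Real.sqrt_pos.2 h1α
  rw [hs1]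
  field_simp
  ring

lemma phi_mul_phi2 (x u : ℝ) : phi (x * u) * phi u
    = (2 * π)⁻¹ * Real.exp (-((1 + x ^ 2) * u ^ 2) / 2) := by
  have hs : Real.sqrt (2 * π) * Real.sqrt (2 * π) = 2 * π :=
    Real.mul_self_sqrt (by positivity)
  unfold phi
  rw [show (Real.sqrt (2*π))⁻¹ * Real.exp (-(x*u) ^ 2 / 2) * ((Real.sqrt (2*π))⁻¹ * Real.exp (-u ^ 2 / 2))
    = (Real.sqrt (2*π) * Real.sqrt (2*π))⁻¹ * (Real.exp (-(x*u) ^ 2 / 2) * Real.exp (-u ^ 2 / 2)) by ring,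
    hs, ← Real.exp_add]
  congr 1
  ring

lemma stepB (b : ℝ) : ∫ u, Phi u * Phi (b * u) ∂(gaussianReal 0 1)
    = 1 / 4 + Real.arcsin (b / Real.sqrt (2 + 2 * b ^ 2)) / (2 * π) := by
  have hJd : ∀ x : ℝ, HasDerivAt (fun y => ∫ u, Phi u * Phi (y * u) ∂(gaussianReal 0 1))
      (((2 * π) * (1 + x ^ 2) * Real.sqrt (2 + x ^ 2))⁻¹) x := by
    intro x
    have hcont : ∀ y : ℝ, Continuous fun u : ℝ => Phi u * Phi (y * u) := fun y =>
      Phi_cont.mul (Phi_cont.comp (continuous_const.mul continuous_id))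
    have H := hasDerivAt_integral_of_dominated_loc_of_deriv_le (μ := gaussianReal 0 1)
      (F := fun y u => Phi u * Phi (y * u)) (F' := fun y u => Phi u * (u * phi (y * u)))
      (x₀ := x) (bound := fun u => |u| * (Real.sqrt (2 * π))⁻¹) (Metric.ball_mem_nhds x one_pos)
      (Eventually.of_forall fun y => (hcont y).aestronglyMeasurable)
      (integrable_bdd (hcont x).aestronglyMeasurable fun u => by
        rw [Real.norm_eq_abs, abs_mul, abs_of_nonneg (Phi_nonneg _), abs_of_nonneg (Phi_nonneg _)]
        exact mul_le_one₀ (Phi_le_one _) (Phi_nonneg _) (Phi_le_one _))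
      ((Phi_cont.mul (continuous_id.mul (phi_cont.comp
        (continuous_const.mul continuous_id)))).aestronglyMeasurable)
      (ae_of_all _ fun u y _ => by
        rw [Real.norm_eq_abs, abs_mul, abs_of_nonneg (Phi_nonneg _), abs_mul]
        calc Phi u * (|u| * |phi (y * u)|)
            ≤ 1 * (|u| * (Real.sqrt (2 * π))⁻¹) := by
              apply mul_le_mul (Phi_le_one u) ?_ (by positivity) one_pos.le
              apply mul_le_mul_of_nonneg_left ?_ (abs_nonneg u)
              rw [abs_of_nonneg (phi_nonneg _)]
              exact phi_le _
          _ = |u| * (Real.sqrt (2 * π))⁻¹ := one_mul _)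
      integrable_bound_gauss
      (ae_of_all _ fun u y _ => by
        have h1 := (hasDerivAt_Phi (y * u)).comp y ((hasDerivAt_id y).mul_const u)
        have h2 := h1.const_mul (Phi u)
        refine h2.congr_deriv ?_
        symm
        show Phi u * (u * phi (y * u)) = Phi u * (phi (y * u) * (1 * u))
        ring)
    have hieq : ∫ u, Phi u * (u * phi (x * u)) ∂(gaussianReal 0 1)
        = ((2 * π) * (1 + x ^ 2) * Real.sqrt (2 + x ^ 2))⁻¹ := by
      rw [integral_gaussianReal_eq]
      have heq : ∀ u : ℝ, Phi u * (u * phi (x * u)) * phi u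
          = (2 * π)⁻¹ * (Phi u * (u * Real.exp (-((1 + x ^ 2) * u ^ 2) / 2))) := by
        intro u
        rw [show Phi u * (u * phi (x * u)) * phi u = Phi u * u * (phi (x * u) * phi u) by ring,
          phi_mul_phi2]
        ring
      simp_rw [heq]
      rw [MeasureTheory.integral_const_mul,
        integral_Phi_mul_gauss (by nlinarith [sq_nonneg x] : (1:ℝ) ≤ 1 + x ^ 2)]
      rw [show (1:ℝ) + (1 + x ^ 2) = 2 + x ^ 2 by ring]
      have hπ : (π:ℝ) ≠ 0 := Real.pi_ne_zero
      have hx2 : (1:ℝ) + x ^ 2 ≠ 0 := by positivity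
      have hsx : Real.sqrt (2 + x ^ 2) ≠ 0 := by positivity
      field_simp
    rw [hieq] at H
    exact H.2
  have hRd : ∀ x : ℝ, HasDerivAt
      (fun y => 1 / 4 + Real.arcsin (y / Real.sqrt (2 + 2 * y ^ 2)) / (2 * π))
      (((2 * π) * (1 + x ^ 2) * Real.sqrt (2 + x ^ 2))⁻¹) x := by
    intro x
    have hq : (0:ℝ) < 2 + 2 * x ^ 2 := by positivity
    have hsq : (0:ℝ) < Real.sqrt (2 + 2 * x ^ 2) := Real.sqrt_pos.2 hq
    have hsq2 : Real.sqrt (2 + 2 * x ^ 2) ^ 2 = 2 + 2 * x ^ 2 := Real.sq_sqrt hq.le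
    have hs2 : (0:ℝ) < Real.sqrt (2 + x ^ 2) := Real.sqrt_pos.2 (by positivity)
    have hs22 : Real.sqrt (2 + x ^ 2) ^ 2 = 2 + x ^ 2 := Real.sq_sqrt (by positivity)
    have hinner : HasDerivAt (fun y : ℝ => y / Real.sqrt (2 + 2 * y ^ 2))
        (2 / Real.sqrt (2 + 2 * x ^ 2) ^ 3) x := by
      have hden : HasDerivAt (fun y : ℝ => Real.sqrt (2 + 2 * y ^ 2))
          ((4 * x) / (2 * Real.sqrt (2 + 2 * x ^ 2))) x := by
        have hpoly : HasDerivAt (fun y : ℝ => 2 + 2 * y ^ 2) (4 * x) x := by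
          have := ((hasDerivAt_pow 2 x).const_mul 2).const_add 2
          refine this.congr_deriv ?_
          simp; ring
        exact hpoly.sqrt hq.ne'
      have := (hasDerivAt_id x).div hden hsq.ne'
      refine this.congr_deriv ?_
      symm
      rw [id_eq]
      field_simp
      rw [Real.sq_sqrt (by positivity)]; ring
    have hwlt : (x / Real.sqrt (2 + 2 * x ^ 2)) ^ 2 < 1 := by
      rw [div_pow, hsq2]
      rw [div_lt_one hq]
      nlinarith
    have hne1 : x / Real.sqrt (2 + 2 * x ^ 2) ≠ 1 := fun h => by rw [h] at hwlt; norm_num at hwlt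
    have hne1' : x / Real.sqrt (2 + 2 * x ^ 2) ≠ -1 := fun h => by rw [h] at hwlt; norm_num at hwlt
    have harc := (Real.hasDerivAt_arcsin hne1' hne1).comp x hinner
    have hfull := (harc.div_const (2 * π)).const_add (1 / 4)
    refine hfull.congr_deriv ?_
    symm
    have h1w : 1 - (x / Real.sqrt (2 + 2 * x ^ 2)) ^ 2 = (2 + x ^ 2) / (2 + 2 * x ^ 2) := by
      rw [div_pow, hsq2]
      field_simp
      ring
    show ((2 * π) * (1 + x ^ 2) * Real.sqrt (2 + x ^ 2))⁻¹
      = 1 / Real.sqrt (1 - (x / Real.sqrt (2 + 2 * x ^ 2)) ^ 2)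
        * (2 / Real.sqrt (2 + 2 * x ^ 2) ^ 3) / (2 * π)
    rw [h1w, Real.sqrt_div (by positivity) _,
      show Real.sqrt (2 + 2*x^2) ^ 3 = (2 + 2*x^2) * Real.sqrt (2 + 2*x^2) by
        rw [pow_succ, hsq2]]
    have hπ : (π:ℝ) ≠ 0 := Real.pi_ne_zero
    field_simp
  have hconst : ∀ x : ℝ, (∫ u, Phi u * Phi (x * u) ∂(gaussianReal 0 1))
      - (1 / 4 + Real.arcsin (x / Real.sqrt (2 + 2 * x ^ 2)) / (2 * π))
      = (∫ u, Phi u * Phi (0 * u) ∂(gaussianReal 0 1))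
      - (1 / 4 + Real.arcsin (0 / Real.sqrt (2 + 2 * 0 ^ 2)) / (2 * π)) := fun x =>
    is_const_of_deriv_eq_zero
      (fun y => ((hJd y).sub (hRd y)).differentiableAt)
      (fun y => by rw [((hJd y).sub (hRd y)).deriv]; ring) x 0
  have h1 : ∫ u, Phi u * Phi ((0:ℝ) * u) ∂(gaussianReal 0 1) = 1 / 4 := by
    have : ∀ u : ℝ, Phi u * Phi ((0:ℝ) * u) = (1/2) * Phi (1 * u) := fun u => by
      rw [zero_mul, Phi_zero, one_mul]; ring
    simp_rw [this]
    rw [MeasureTheory.integral_const_mul, half 1]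
    norm_num
  have h2 : Real.arcsin ((0:ℝ) / Real.sqrt (2 + 2 * 0 ^ 2)) / (2 * π) = 0 := by
    norm_num
  have := hconst b
  rw [h1, h2] at this
  linarith

lemma cdf_scale {σ : ℝ} (hσ : 0 < σ) (t : ℝ) :
    cdf (gaussianReal 0 ⟨σ ^ 2, sq_nonneg σ⟩) (σ * t) = Phi t := by
  have hmap : Measure.map (fun x => σ * x) (gaussianReal 0 1)
      = gaussianReal 0 ⟨σ ^ 2, sq_nonneg σ⟩ := by
    have h := gaussianReal_map_const_mul (μ := 0) (v := 1) σ
    rw [mul_zero, mul_one] at h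
    exact h
  have : IsProbabilityMeasure (gaussianReal 0 ⟨σ ^ 2, sq_nonneg σ⟩) := by rw [← hmap]; exact Measure.isProbabilityMeasure_map (measurable_const_mul σ).aemeasurable
  rw [Phi, cdf_eq_real, cdf_eq_real, measureReal_def, measureReal_def, ← hmap,
    Measure.map_apply (measurable_const_mul σ) measurableSet_Iic]
  congr 2
  ext x
  simp only [Set.mem_preimage, Set.mem_Iic]
  exact mul_le_mul_iff_of_pos_left hσ

/-- Kruskal's formula.  A centered jointly Gaussian pair `(X, Y)` with Pearson
correlation `r` and nondegenerate marginals (standard deviations `σX, σY > 0`) is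
realized as `X = σX p₁`, `Y = σY (r p₁ + √(1-r²) p₂)` for independent standard
Gaussians.  Its Spearman rank correlation `12·E[F_X(X)·F_Y(Y)] - 3`, where `F_X, F_Y`
are the marginal CDFs, equals `(6/π) arcsin(r/2)`. -/
theorem stmt_10 (r σX σY : ℝ) (hr : r ∈ Set.Icc (-1 : ℝ) 1)
    (hσX : 0 < σX) (hσY : 0 < σY) :
    let P := (gaussianReal 0 1).prod (gaussianReal 0 1)
    let X : ℝ × ℝ → ℝ := fun p => σX * p.1
    let Y : ℝ × ℝ → ℝ := fun p => σY * (r * p.1 + Real.sqrt (1 - r ^ 2) * p.2)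
    let FX := cdf (gaussianReal 0 ⟨σX ^ 2, sq_nonneg σX⟩)
    let FY := cdf (gaussianReal 0 ⟨σY ^ 2, sq_nonneg σY⟩)
    12 * (∫ p, FX (X p) * FY (Y p) ∂P) - 3 = (6 / Real.pi) * Real.arcsin (r / 2) := by
  intro P X Y FX FY
  have hr2 : r ^ 2 ≤ 1 := by nlinarith [hr.1, hr.2]
  have hs2 : Real.sqrt (1 - r ^ 2) ^ 2 = 1 - r ^ 2 := Real.sq_sqrt (by linarith)
  have h2r : (0:ℝ) < 2 - r ^ 2 := by linarith
  have hsr : (0:ℝ) < Real.sqrt (2 - r ^ 2) := Real.sqrt_pos.2 h2r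
  have hsr2 : Real.sqrt (2 - r ^ 2) ^ 2 = 2 - r ^ 2 := Real.sq_sqrt h2r.le
  have key : (fun p : ℝ × ℝ => FX (X p) * FY (Y p))
      = fun p : ℝ × ℝ => Phi p.1 * Phi (r * p.1 + Real.sqrt (1 - r ^ 2) * p.2) := by
    funext p
    have h1 : FX (X p) = Phi p.1 := cdf_scale hσX p.1
    have h2 : FY (Y p) = Phi (r * p.1 + Real.sqrt (1 - r ^ 2) * p.2) :=
      cdf_scale hσY (r * p.1 + Real.sqrt (1 - r ^ 2) * p.2)
    rw [h1, h2]
  have hcont : Continuous fun p : ℝ × ℝ => Phi p.1 * Phi (r * p.1 + Real.sqrt (1 - r ^ 2) * p.2) := by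
    apply (Phi_cont.comp continuous_fst).mul
    apply Phi_cont.comp
    exact (continuous_const.mul continuous_fst).add (continuous_const.mul continuous_snd)
  have hint : Integrable (fun p : ℝ × ℝ => Phi p.1 * Phi (r * p.1 + Real.sqrt (1 - r ^ 2) * p.2)) P :=
    integrable_bdd hcont.aestronglyMeasurable fun p => by
      rw [Real.norm_eq_abs, abs_mul, abs_of_nonneg (Phi_nonneg _), abs_of_nonneg (Phi_nonneg _)]
      exact mul_le_one₀ (Phi_le_one _) (Phi_nonneg _) (Phi_le_one _)
  have hfub : (∫ p, FX (X p) * FY (Y p) ∂P)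
      = ∫ u, ∫ v, Phi u * Phi (r * u + Real.sqrt (1 - r ^ 2) * v)
          ∂(gaussianReal 0 1) ∂(gaussianReal 0 1) := by
    rw [show (∫ p, FX (X p) * FY (Y p) ∂P)
        = ∫ p : ℝ × ℝ, Phi p.1 * Phi (r * p.1 + Real.sqrt (1 - r ^ 2) * p.2) ∂P from by rw [key]]
    exact MeasureTheory.integral_prod _ hint
  have hinner : ∀ u : ℝ, (∫ v, Phi u * Phi (r * u + Real.sqrt (1 - r ^ 2) * v) ∂(gaussianReal 0 1))
      = Phi u * Phi ((r / Real.sqrt (2 - r ^ 2)) * u) := by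
    intro u
    rw [MeasureTheory.integral_const_mul, stepA (r * u) (Real.sqrt (1 - r ^ 2))]
    congr 2
    rw [show (1:ℝ) + Real.sqrt (1 - r ^ 2) ^ 2 = 2 - r ^ 2 by rw [hs2]; ring]
    ring
  have hJ : (∫ u, Phi u * Phi ((r / Real.sqrt (2 - r ^ 2)) * u) ∂(gaussianReal 0 1))
      = 1 / 4 + Real.arcsin (r / 2) / (2 * π) := by
    rw [stepB (r / Real.sqrt (2 - r ^ 2))]
    congr 2
    have h1 : 2 + 2 * (r / Real.sqrt (2 - r ^ 2)) ^ 2 = 4 / (2 - r ^ 2) := by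
      rw [div_pow, hsr2]
      field_simp
      ring
    rw [h1, Real.sqrt_div (by norm_num : (0:ℝ) ≤ 4) _,
      show Real.sqrt (4:ℝ) = 2 by
        rw [show (4:ℝ) = 2 ^ 2 by norm_num, Real.sqrt_sq two_pos.le]]
    congr 1
    field_simp
  rw [hfub]
  simp_rw [hinner]
  rw [hJ]
  have hπ : (π:ℝ) ≠ 0 := Real.pi_ne_zero
  field_simp
  ring
end

section
/- Let (U, V) be standard bivariate normal with correlation ρ ∈ [-1, 1]. Then Cov(|U|, |V|) = (2/π)(√(1-ρ²) + ρ·arcsin ρ - 1), and there exists a constant C > 0 such that Cov(|U|, |V|) ≤ C·ρ² for all ρ ∈ [-1, 1]. -/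
/-!
In polar coordinates the standard Gaussian measure on `ℝ²` splits into a radial part and a uniform
angle, so the expectation of a positively homogeneous function of degree `k` is the radial moment
`∫₀^∞ r^(k+1) e^(-r²/2) dr` times the integral of the function over the unit circle, divided by
`2π`. Writing `(ρ, √(1-ρ²)) = (cos α, sin α)` with `α = arccos ρ`, the three expectations in
`Cov(|U|, |V|)` reduce to the integrals `∫ |cos (θ - α)| = 4` and
`∫ |cos θ| |cos (θ - α)| = (π - 2α) cos α + 2 sin α` over a period, and `π - 2α = 2 arcsin ρ`.
The bound comes from `√(1-ρ²) ≤ 1` and Jordan's inequality `|arcsin ρ| ≤ (π/2) |ρ|`.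
-/

open MeasureTheory ProbabilityTheory Real intervalIntegral

lemma integral_Ioi_sq_mul_exp_neg_sq_div_two :
    ∫ r in Set.Ioi (0 : ℝ), r ^ 2 * exp (-r ^ 2 / 2) = √(2 * π) / 2 := by
  have h := integral_rpow_mul_exp_neg_mul_rpow (p := 2) (q := 2) (b := 1 / 2)
    (by norm_num) (by norm_num) (by norm_num)
  have hΓ : Gamma (3 / 2) = √π / 2 := by
    simpa [-one_div, show (1 : ℝ) + 1 / 2 = 3 / 2 by norm_num]
      using Real.Gamma_nat_add_one_add_half 0
  have h2 : (1 / 2 : ℝ) ^ (-(3 / 2 : ℝ)) = 2 * √2 := by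
    rw [rpow_neg (by norm_num), one_div, inv_rpow (by norm_num), inv_inv,
      show (3 / 2 : ℝ) = 1 + 1 / 2 by norm_num, rpow_add (by norm_num), rpow_one, sqrt_eq_rpow]
  norm_num [hΓ, h2] at h
  convert h using 3 with r
  · ring_nf
  · rw [sqrt_mul (by norm_num)]; ring

lemma integral_Ioi_cube_mul_exp_neg_sq_div_two :
    ∫ r in Set.Ioi (0 : ℝ), r ^ 3 * exp (-r ^ 2 / 2) = 2 := by
  have h := integral_rpow_mul_exp_neg_mul_rpow (p := 2) (q := 3) (b := 1 / 2)
    (by norm_num) (by norm_num) (by norm_num)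
  norm_num at h
  convert h using 3 with r
  ring_nf

lemma integral_gaussianReal_prod_eq {E : Type*} [NormedAddCommGroup E] [NormedSpace ℝ E]
    (f : ℝ × ℝ → E) :
    ∫ p, f p ∂(gaussianReal 0 1).prod (gaussianReal 0 1)
      = ∫ p : ℝ × ℝ, ((2 * π)⁻¹ * exp (-(p.1 ^ 2 + p.2 ^ 2) / 2)) • f p := by
  rw [gaussianReal_of_var_ne_zero 0 one_ne_zero,
    prod_withDensity (measurable_gaussianPDF _ _) (measurable_gaussianPDF _ _),
    ← Measure.volume_eq_prod, integral_withDensity_eq_integral_toReal_smul (by fun_prop)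
      (ae_of_all _ fun _ ↦ ENNReal.mul_lt_top gaussianPDF_lt_top gaussianPDF_lt_top)]
  congr with p
  rw [ENNReal.toReal_mul, toReal_gaussianPDF, toReal_gaussianPDF]
  simp only [gaussianPDFReal, NNReal.coe_one, mul_one, sub_zero]
  congr 1
  rw [mul_mul_mul_comm, ← mul_inv, ← exp_add, mul_self_sqrt (by positivity)]
  ring_nf

lemma integral_gaussianReal_prod_of_homogeneous (G : ℝ × ℝ → ℝ) (k : ℕ)
    (hG : ∀ r : ℝ, 0 < r → ∀ x, G (r • x) = r ^ k * G x) :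
    ∫ p, G p ∂(gaussianReal 0 1).prod (gaussianReal 0 1)
      = (∫ r in Set.Ioi (0 : ℝ), r ^ (k + 1) * exp (-r ^ 2 / 2))
        * (∫ θ in -π..π, G (cos θ, sin θ)) / (2 * π) := by
  have hpolar : ∀ p ∈ Set.Ioi (0 : ℝ) ×ˢ Set.Ioo (-π) π,
      p.1 • ((2 * π)⁻¹ * exp (-((polarCoord.symm p).1 ^ 2 + (polarCoord.symm p).2 ^ 2) / 2)) •
        G (polarCoord.symm p)
        = (p.1 ^ (k + 1) * exp (-p.1 ^ 2 / 2)) * ((2 * π)⁻¹ * G (cos p.2, sin p.2)) := by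
    rintro ⟨r, θ⟩ ⟨hr, -⟩
    have hsymm : polarCoord.symm (r, θ) = r • (cos θ, sin θ) := by simp [polarCoord_symm_apply]
    rw [hsymm, hG r hr]
    simp only [Prod.smul_fst, Prod.smul_snd, smul_eq_mul]
    rw [show (r * cos θ) ^ 2 + (r * sin θ) ^ 2 = r ^ 2 by
      linear_combination r ^ 2 * sin_sq_add_cos_sq θ]
    ring
  rw [integral_gaussianReal_prod_eq, ← integral_comp_polarCoord_symm, polarCoord_target,
    setIntegral_congr_fun (measurableSet_Ioi.prod measurableSet_Ioo) hpolar,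
    Measure.volume_eq_prod]
  refine (setIntegral_prod_mul (fun r : ℝ ↦ r ^ (k + 1) * exp (-r ^ 2 / 2))
    (fun θ ↦ (2 * π)⁻¹ * G (cos θ, sin θ)) _ _).trans ?_
  rw [MeasureTheory.integral_const_mul, intervalIntegral.integral_of_le (by linarith [pi_pos]),
    integral_Ioc_eq_integral_Ioo]
  ring

lemma integral_neg_pi_pi_eq_two_mul_of_periodic {f : ℝ → ℝ} (hf : Function.Periodic f π)
    (hint : ∀ a b, IntervalIntegrable f volume a b) (t : ℝ) :
    ∫ θ in -π..π, f θ = 2 * ∫ θ in t..t + π, f θ := by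
  have h := hf.intervalIntegral_add_zsmul_eq 2 (-π) hint
  rw [show -π + (2 : ℤ) • π = π by simp; ring, hf.intervalIntegral_add_eq (-π) t] at h
  simpa using h

lemma integral_abs_cos_sub (α : ℝ) : ∫ θ in -π..π, |cos (θ - α)| = 4 := by
  have hper : Function.Periodic (fun θ ↦ |cos (θ - α)|) π := fun θ ↦ by
    simp [add_sub_right_comm, cos_add_pi]
  rw [integral_neg_pi_pi_eq_two_mul_of_periodic hper
      (fun a b ↦ (by fun_prop : Continuous _).intervalIntegrable a b) (α - π / 2),
    integral_comp_sub_right (fun u ↦ |cos u|),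
    integral_congr (g := cos) fun u hu ↦ abs_of_nonneg (cos_nonneg_of_mem_Icc ?_)]
  · rw [integral_cos, show α - π / 2 + π - α = π / 2 by ring, sub_sub_cancel_left, sin_neg,
      sin_pi_div_two]
    norm_num
  · rw [Set.uIcc_of_le (by linarith [pi_pos])] at hu
    constructor <;> linarith [hu.1, hu.2]

lemma hasDerivAt_primitive_cos_mul_cos_sub (α θ : ℝ) :
    HasDerivAt (fun θ ↦ θ * cos α / 2 + sin (2 * θ - α) / 4) (cos θ * cos (θ - α)) θ := by
  have h := (((hasDerivAt_id θ).const_mul 2).sub_const α).sin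
  refine (((hasDerivAt_id θ).mul_const (cos α)).div_const 2 |>.add (h.div_const 4)).congr_deriv ?_
  have e₁ : cos (2 * θ - α) = cos θ * cos (θ - α) - sin θ * sin (θ - α) := by
    rw [← cos_add]; ring_nf
  have e₂ : cos α = cos θ * cos (θ - α) + sin θ * sin (θ - α) := by
    rw [← cos_sub]; ring_nf
  simp only [id]
  linear_combination (e₁ + e₂) / 2

lemma integral_abs_cos_mul_abs_cos_sub {α : ℝ} (h0 : 0 ≤ α) (hπ : α ≤ π) :
    ∫ θ in -π..π, |cos θ| * |cos (θ - α)| = (π - 2 * α) * cos α + 2 * sin α := by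
  have hper : Function.Periodic (fun θ ↦ |cos θ| * |cos (θ - α)|) π := fun θ ↦ by
    simp [add_sub_right_comm, cos_add_pi]
  have hint : ∀ a b, IntervalIntegrable (fun θ ↦ |cos θ| * |cos (θ - α)|) volume a b :=
    fun a b ↦ (by fun_prop : Continuous _).intervalIntegrable a b
  have hFTC : ∀ a b, ∫ θ in a..b, cos θ * cos (θ - α)
      = (b * cos α / 2 + sin (2 * b - α) / 4) - (a * cos α / 2 + sin (2 * a - α) / 4) :=
    fun a b ↦ integral_eq_sub_of_hasDerivAt (fun θ _ ↦ hasDerivAt_primitive_cos_mul_cos_sub α θ)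
      ((by fun_prop : Continuous _).intervalIntegrable a b)
  -- On `[-π/2, π/2]` the factor `cos (θ - α)` changes sign exactly at `θ = α - π/2`.
  have hneg : ∫ θ in -(π / 2)..(α - π / 2), |cos θ| * |cos (θ - α)|
      = -∫ θ in -(π / 2)..(α - π / 2), cos θ * cos (θ - α) := by
    rw [← intervalIntegral.integral_neg]
    refine integral_congr fun θ hθ ↦ ?_
    rw [Set.uIcc_of_le (by linarith)] at hθ
    have hc : cos (θ - α) ≤ 0 := by
      rw [← cos_neg]
      exact cos_nonpos_of_pi_div_two_le_of_le (by linarith [hθ.2]) (by linarith [hθ.1])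
    rw [abs_of_nonneg (cos_nonneg_of_mem_Icc ⟨hθ.1, by linarith [hθ.2]⟩), abs_of_nonpos hc,
      mul_neg]
  have hpos : ∫ θ in (α - π / 2)..(π / 2), |cos θ| * |cos (θ - α)|
      = ∫ θ in (α - π / 2)..(π / 2), cos θ * cos (θ - α) := by
    refine integral_congr fun θ hθ ↦ ?_
    rw [Set.uIcc_of_le (by linarith)] at hθ
    rw [abs_of_nonneg (cos_nonneg_of_mem_Icc ⟨by linarith [hθ.1], hθ.2⟩),
      abs_of_nonneg (cos_nonneg_of_mem_Icc ⟨by linarith [hθ.1], by linarith [hθ.2]⟩)]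
  rw [integral_neg_pi_pi_eq_two_mul_of_periodic hper hint (-(π / 2)),
    show -(π / 2) + π = π / 2 by ring,
    ← integral_add_adjacent_intervals (hint _ (α - π / 2)) (hint _ _), hneg, hpos, hFTC, hFTC,
    show 2 * -(π / 2) - α = -(α + π) by ring, show 2 * (α - π / 2) - α = α - π by ring,
    show 2 * (π / 2) - α = π - α by ring, sin_neg, sin_add_pi, sin_sub_pi, sin_pi_sub]
  ring

lemma integral_abs_cos_mul_add_sin_mul (α : ℝ) :
    ∫ p, |cos α * p.1 + sin α * p.2| ∂(gaussianReal 0 1).prod (gaussianReal 0 1) = √(2 / π) := by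
  rw [integral_gaussianReal_prod_of_homogeneous _ 1 fun r hr x ↦ by
      simp only [Prod.smul_fst, Prod.smul_snd, smul_eq_mul]
      rw [mul_left_comm _ r, mul_left_comm _ r, ← mul_add, abs_mul, abs_of_pos hr, pow_one],
    integral_Ioi_sq_mul_exp_neg_sq_div_two]
  simp_rw [mul_comm (cos α), mul_comm (sin α), ← cos_sub, integral_abs_cos_sub]
  rw [sqrt_div' _ pi_pos.le, sqrt_mul' _ pi_pos.le]
  field_simp
  rw [sq_sqrt pi_pos.le]
  ring

lemma integral_abs_mul_abs_cos_mul_add_sin_mul {α : ℝ} (h0 : 0 ≤ α) (hπ : α ≤ π) :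
    ∫ p, |p.1| * |cos α * p.1 + sin α * p.2| ∂(gaussianReal 0 1).prod (gaussianReal 0 1)
      = ((π - 2 * α) * cos α + 2 * sin α) / π := by
  rw [integral_gaussianReal_prod_of_homogeneous _ 2 fun r hr x ↦ by
      simp only [Prod.smul_fst, Prod.smul_snd, smul_eq_mul]
      rw [mul_left_comm _ r, mul_left_comm _ r, ← mul_add, abs_mul, abs_mul, abs_of_pos hr]
      ring,
    integral_Ioi_cube_mul_exp_neg_sq_div_two]
  simp_rw [mul_comm (cos α), mul_comm (sin α), ← cos_sub, integral_abs_cos_mul_abs_cos_sub h0 hπ]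
  field_simp

lemma abs_arcsin_le_pi_div_two_mul_abs (x : ℝ) : |arcsin x| ≤ π / 2 * |x| := by
  wlog hx : 0 ≤ x generalizing x
  · simpa [arcsin_neg] using this (-x) (by linarith)
  rw [abs_of_nonneg (arcsin_nonneg.2 hx), abs_of_nonneg hx]
  rcases le_or_gt x 1 with h1 | h1
  · have h := mul_le_sin (arcsin_nonneg.2 hx) (arcsin_le_pi_div_two x)
    rw [sin_arcsin (by linarith) h1] at h
    rw [div_mul_eq_mul_div, div_le_iff₀ pi_pos] at h
    linarith
  · rw [arcsin_of_one_le h1.le]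
    nlinarith [pi_pos]

lemma sqrt_one_sub_sq_add_mul_arcsin_sub_one_le (x : ℝ) :
    √(1 - x ^ 2) + x * arcsin x - 1 ≤ π / 2 * x ^ 2 := by
  have hsqrt : √(1 - x ^ 2) ≤ 1 := sqrt_le_one.2 (by nlinarith)
  have harcsin : x * arcsin x ≤ π / 2 * x ^ 2 :=
    calc x * arcsin x ≤ |x| * |arcsin x| := by rw [← abs_mul]; exact le_abs_self _
      _ ≤ |x| * (π / 2 * |x|) := by gcongr; exact abs_arcsin_le_pi_div_two_mul_abs x
      _ = π / 2 * x ^ 2 := by rw [← sq_abs x]; ring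
  linarith

lemma covAbs_eq {ρ : ℝ} (h₁ : -1 ≤ ρ) (h₂ : ρ ≤ 1) :
    (∫ p, |p.1| * |ρ * p.1 + √(1 - ρ ^ 2) * p.2| ∂(gaussianReal 0 1).prod (gaussianReal 0 1))
      - (∫ p, |p.1| ∂(gaussianReal 0 1).prod (gaussianReal 0 1))
        * (∫ p, |ρ * p.1 + √(1 - ρ ^ 2) * p.2| ∂(gaussianReal 0 1).prod (gaussianReal 0 1))
      = 2 / π * (√(1 - ρ ^ 2) + ρ * arcsin ρ - 1) := by
  have hcos : cos (arccos ρ) = ρ := cos_arccos h₁ h₂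
  have hU : ∫ p, |p.1| ∂(gaussianReal 0 1).prod (gaussianReal 0 1) = √(2 / π) := by
    simpa using integral_abs_cos_mul_add_sin_mul 0
  have hV := integral_abs_cos_mul_add_sin_mul (arccos ρ)
  have hUV := integral_abs_mul_abs_cos_mul_add_sin_mul (arccos_nonneg ρ) (arccos_le_pi ρ)
  rw [hcos, sin_arccos] at hV hUV
  rw [hUV, hU, hV, mul_self_sqrt (by positivity), arccos_eq_pi_div_two_sub_arcsin]
  ring

/-- Folded-normal covariance.  A standard bivariate Gaussian pair with correlation `ρ`
is realized as `(U, V) = (p₁, ρ p₁ + √(1-ρ²) p₂)` for independent standard Gaussians.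
Then `Cov(|U|, |V|) = (2/π)(√(1-ρ²) + ρ·arcsin ρ - 1)`, and this covariance is
bounded by `C·ρ²` for some constant `C > 0` uniformly over `ρ ∈ [-1, 1]`. -/
theorem stmt_12 :
    let P := (gaussianReal 0 1).prod (gaussianReal 0 1)
    let covAbs : ℝ → ℝ := fun ρ =>
      (∫ p : ℝ × ℝ, |p.1| * |ρ * p.1 + Real.sqrt (1 - ρ ^ 2) * p.2| ∂P) -
        (∫ p : ℝ × ℝ, |p.1| ∂P) *
          (∫ p : ℝ × ℝ, |ρ * p.1 + Real.sqrt (1 - ρ ^ 2) * p.2| ∂P)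
    (∀ ρ ∈ Set.Icc (-1 : ℝ) 1,
        covAbs ρ = (2 / Real.pi) * (Real.sqrt (1 - ρ ^ 2) + ρ * Real.arcsin ρ - 1)) ∧
    ∃ C : ℝ, 0 < C ∧ ∀ ρ ∈ Set.Icc (-1 : ℝ) 1, covAbs ρ ≤ C * ρ ^ 2 := by
  intro P covAbs
  refine ⟨fun ρ hρ ↦ covAbs_eq hρ.1 hρ.2, 1, one_pos, fun ρ hρ ↦ ?_⟩
  calc covAbs ρ = 2 / π * (√(1 - ρ ^ 2) + ρ * arcsin ρ - 1) := covAbs_eq hρ.1 hρ.2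
    _ ≤ 2 / π * (π / 2 * ρ ^ 2) := by
      gcongr; exact sqrt_one_sub_sq_add_mul_arcsin_sub_one_le ρ
    _ = 1 * ρ ^ 2 := by field_simp
end
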